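/- arXiv:1910.01527 — 3 statements merged into one kernel-verified Lean document; each statement's English description precedes it below -/
import Mathlib

section
/- Let X be a real Banach space and let {(e_α, e*_α)}_{α∈Γ} be an M-basis for X. Set Z := span{e_α : α∈Γ} (the algebraic linear span). Then every non-separable linear subspace Z₀ of Z contains an uncountable biorthogonal system: there exist families (v_β)_{β<ω₁} in Z₀ and (ψ_β)_{β<ω₁} in X* such that ψ_β(v_γ) = 1 if β = γ and 0 otherwise. -/
open Cardinal Ordinal TopologicalSpace

universe u v

/-- The *density character* of a topological space: the least cardinality of a dense subset. -/
noncomputable def densityChar (X : Type u) [TopologicalSpace X] : Cardinal.{u} :=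
  sInf {c : Cardinal.{u} | ∃ s : Set X, Dense s ∧ Cardinal.mk s = c}

/-- A family `{(e γ, f γ)}` is *biorthogonal* if `f α (e β) = δ_{αβ}`. -/
def IsBiorthogonal {X : Type*} [NormedAddCommGroup X] [NormedSpace ℝ X]
    {Γ : Type*} (e : Γ → X) (f : Γ → X →L[ℝ] ℝ) : Prop :=
  (∀ α, f α (e α) = 1) ∧ ∀ α β, α ≠ β → f α (e β) = 0

/-- A biorthogonal family is a *Markushevich basis* (M-basis) for `X` if the linear span
of the vectors is dense and the functionals separate the points of `X`. -/
def IsMBasis {X : Type*} [NormedAddCommGroup X] [NormedSpace ℝ X]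
    {Γ : Type*} (e : Γ → X) (f : Γ → X →L[ℝ] ℝ) : Prop :=
  IsBiorthogonal e f ∧ Dense (Submodule.span ℝ (Set.range e) : Set X) ∧
    ∀ x : X, (∀ γ, f γ x = 0) → x = 0

/-- An M-basis *countably supports* `X*` if every continuous functional has countable
support with respect to the basis vectors. -/
def CountablySupports {X : Type*} [NormedAddCommGroup X] [NormedSpace ℝ X]
    {Γ : Type*} (e : Γ → X) : Prop :=
  ∀ φ : X →L[ℝ] ℝ, {γ | φ (e γ) ≠ 0}.Countable

/-- A normed space is *weakly Lindelöf determined* (WLD) if it admits an M-basis that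
countably supports the dual. -/
def IsWLD (X : Type u) [NormedAddCommGroup X] [NormedSpace ℝ X] : Prop :=
  ∃ (Γ : Type u) (e : Γ → X) (f : Γ → X →L[ℝ] ℝ), IsMBasis e f ∧ CountablySupports e

/-- Two normed spaces are *densely isomorphic* if they contain dense linear subspaces that
are isomorphic via a continuous linear bijection with continuous inverse. -/
def DenselyIsomorphic (X : Type*) (Y : Type*) [NormedAddCommGroup X] [NormedSpace ℝ X]
    [NormedAddCommGroup Y] [NormedSpace ℝ Y] : Prop :=
  ∃ (X₀ : Submodule ℝ X) (Y₀ : Submodule ℝ Y),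
    Dense (X₀ : Set X) ∧ Dense (Y₀ : Set Y) ∧ Nonempty (X₀ ≃L[ℝ] Y₀)

/-- A cardinal `Γ` is *strongly `ω₁`-inaccessible* (`ω₁ ⋘ Γ`) if `α ^ ℵ₀ < Γ`
for every cardinal `α < Γ`. -/
def StronglyOmega1Inaccessible (Γ : Cardinal.{u}) : Prop :=
  ∀ α : Cardinal.{u}, α < Γ → α ^ Cardinal.aleph0.{u} < Γ

lemma aux_repr {X : Type u} [NormedAddCommGroup X] [NormedSpace ℝ X]
    {Γ : Type v} {e : Γ → X} {f : Γ → X →L[ℝ] ℝ} (hbi : IsBiorthogonal e f)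
    {z : X} (hz : z ∈ Submodule.span ℝ (Set.range e)) :
    ∃ c : Γ →₀ ℝ, (∀ γ, f γ z = c γ) ∧ z ∈ Submodule.span ℝ (e '' (c.support : Set Γ)) := by
  obtain ⟨c, hc⟩ := Finsupp.mem_span_range_iff_exists_finsupp.1 hz
  refine ⟨c, fun γ => ?_, ?_⟩
  · rw [← hc, map_finsuppSum, Finsupp.sum]
    rw [Finset.sum_eq_single γ (fun i _ hi => by simp [hbi.2 γ i (Ne.symm hi)])
      (fun h => by simp [Finsupp.notMem_support_iff.1 h])]
    simp [hbi.1 γ]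
  · rw [← hc, Finsupp.sum]
    exact Submodule.sum_mem _ fun i hi => Submodule.smul_mem _ _
      (Submodule.subset_span ⟨i, by simpa using hi, rfl⟩)

lemma aux_supp_finite {X : Type u} [NormedAddCommGroup X] [NormedSpace ℝ X]
    {Γ : Type v} {e : Γ → X} {f : Γ → X →L[ℝ] ℝ} (hbi : IsBiorthogonal e f)
    {z : X} (hz : z ∈ Submodule.span ℝ (Set.range e)) :
    {γ | f γ z ≠ 0}.Finite := by
  obtain ⟨c, hc, -⟩ := aux_repr hbi hz
  refine (c.finite_support).subset fun γ hγ => ?_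
  simp only [Function.mem_support, ← hc γ]
  exact hγ

open scoped Classical in
lemma aux_extend {X : Type u} [NormedAddCommGroup X] [NormedSpace ℝ X]
    {Γ : Type v} {e : Γ → X} {f : Γ → X →L[ℝ] ℝ} (hbi : IsBiorthogonal e f)
    {Z₀ : Submodule ℝ X} (hZ₀ : Z₀ ≤ Submodule.span ℝ (Set.range e))
    (hns : ¬ SeparableSpace Z₀)
    {A : Set (X × Γ)} (h1 : ∀ p ∈ A, p.1 ∈ Z₀)
    (h2 : ∀ p ∈ A, ∀ q ∈ A, f p.2 q.1 = if p = q then 1 else 0)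
    (hAc : A.Countable) :
    ∃ p : X × Γ, p ∉ A ∧ (∀ q ∈ insert p A, q.1 ∈ Z₀) ∧
      (∀ q ∈ insert p A, ∀ r ∈ insert p A, f q.2 r.1 = if q = r then 1 else 0) := by
  classical
  set S : Set Γ := ⋃ p ∈ A, {γ | f γ p.1 ≠ 0} with hSdef
  have hScount : S.Countable :=
    hAc.biUnion fun p hp => (aux_supp_finite hbi (hZ₀ (h1 p hp))).countable
  have key : ∃ z ∈ Z₀, (∀ q ∈ A, f q.2 z = 0) ∧ ∃ γ, f γ z ≠ 0 ∧ γ ∉ S := by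
    by_contra hH
    push_neg at hH
    -- hH : ∀ z ∈ Z₀, (∀ q ∈ A, f q.2 z = 0) → ∀ γ, f γ z ≠ 0 → γ ∈ S
    set T : Set X := e '' S ∪ Prod.fst '' A with hTdef
    have hTc : T.Countable := (hScount.image e).union (hAc.image _)
    have hsub : (Z₀ : Set X) ⊆ (Submodule.span ℝ T : Set X) := by
      intro z hz
      have hfin : {p ∈ A | f p.2 z ≠ 0}.Finite := by
        have himg : (Prod.snd '' {p ∈ A | f p.2 z ≠ 0}) ⊆ {γ | f γ z ≠ 0} := by
          rintro γ ⟨p, hp, rfl⟩; exact hp.2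
        have hinj : Set.InjOn Prod.snd {p ∈ A | f p.2 z ≠ 0} := by
          intro p hp q hq hpq
          by_contra hne
          have hpq1 := h2 p hp.1 q hq.1
          have hqq := h2 q hq.1 q hq.1
          rw [if_pos rfl] at hqq
          rw [if_neg hne, hpq] at hpq1
          rw [hpq1] at hqq
          exact one_ne_zero hqq.symm
        exact Set.Finite.of_finite_image
          ((aux_supp_finite hbi (hZ₀ hz)).subset himg) hinj
      set B := hfin.toFinset with hBdef
      have hBA : ∀ p ∈ B, p ∈ A := fun p hp => (hfin.mem_toFinset.1 hp).1
      set z' := z - ∑ p ∈ B, f p.2 z • p.1 with hz'def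
      have hz' : z' ∈ Z₀ :=
        sub_mem hz (Submodule.sum_mem _ fun p hp =>
          Submodule.smul_mem _ _ (h1 p (hBA p hp)))
      have horth : ∀ q ∈ A, f q.2 z' = 0 := by
        intro q hq
        have e1 : f q.2 z' = f q.2 z - ∑ p ∈ B, f p.2 z * f q.2 p.1 := by
          simp [hz'def, _root_.smul_eq_mul]
        have e2 : ∑ p ∈ B, f p.2 z * f q.2 p.1
            = ∑ p ∈ B, if q = p then f q.2 z else 0 := by
          refine Finset.sum_congr rfl fun p hp => ?_
          rw [h2 q hq p (hBA p hp)]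
          by_cases h : q = p
          · simp [h]
          · simp [h]
        rw [e1, e2, Finset.sum_ite_eq]
        by_cases h : q ∈ B
        · simp [h]
        · have hq0 : f q.2 z = 0 := by
            by_contra hne
            exact h (hfin.mem_toFinset.2 ⟨hq, hne⟩)
          simp [h, hq0]
      have hz'S : ∀ γ, f γ z' ≠ 0 → γ ∈ S := hH z' hz' horth
      obtain ⟨c, hcz, hcm⟩ := aux_repr hbi (hZ₀ hz')
      have hTsub : (e '' (c.support : Set Γ)) ⊆ T := by
        rintro x ⟨i, hi, rfl⟩
        exact Or.inl ⟨i, hz'S i (by rw [hcz i]; simpa using hi), rfl⟩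
      have hz'span : z' ∈ Submodule.span ℝ T :=
        Submodule.span_mono hTsub hcm
      have hzeq : z = z' + ∑ p ∈ B, f p.2 z • p.1 := by
        rw [hz'def]; abel
      rw [hzeq]
      exact Submodule.add_mem _ hz'span (Submodule.sum_mem _ fun p hp =>
        Submodule.smul_mem _ _ (Submodule.subset_span (Or.inr ⟨p, hBA p hp, rfl⟩)))
    have hsep : IsSeparable (Z₀ : Set X) :=
      ((hTc.isSeparable).span).mono hsub
    exact hns hsep.separableSpace
  obtain ⟨z, hz, hW, γ, hγz, hγS⟩ := key
  set v : X := (f γ z)⁻¹ • z with hvdef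
  have hv1 : f γ v = 1 := by
    rw [hvdef, map_smul, _root_.smul_eq_mul, inv_mul_cancel₀ hγz]
  have hWv : ∀ q ∈ A, f q.2 v = 0 := fun q hq => by
    rw [hvdef, map_smul, _root_.smul_eq_mul, hW q hq, mul_zero]
  have hvq : ∀ q ∈ A, f γ q.1 = 0 := fun q hq => by
    by_contra h
    exact hγS (Set.mem_biUnion hq h)
  have hpA : (v, γ) ∉ A := fun hp => by
    have := hWv _ hp
    rw [hv1] at this
    exact one_ne_zero this
  refine ⟨(v, γ), hpA, ?_, ?_⟩
  · rintro q (rfl | hq)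
    · exact Z₀.smul_mem _ hz
    · exact h1 q hq
  · rintro q (rfl | hq) r (rfl | hr)
    · simpa using hv1
    · have hne : (v, γ) ≠ r := fun h => by rw [h] at hpA; exact hpA hr
      rw [if_neg hne]
      exact hvq r hr
    · have hne : q ≠ (v, γ) := fun h => by rw [← h] at hpA; exact hpA hq
      rw [if_neg hne]
      exact hWv q hq
    · exact h2 q hq r hr

/-- (Lemma 4.5 of the paper.) If `{(e α, f α)}` is an M-basis for `X`, then
every non-separable subspace of `span {e α}` contains an uncountable biorthogonal system. -/
theorem statement15 {X : Type u} [NormedAddCommGroup X] [NormedSpace ℝ X] [CompleteSpace X]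
    {Γ : Type v} (e : Γ → X) (f : Γ → X →L[ℝ] ℝ) (hM : IsMBasis e f)
    (Z₀ : Submodule ℝ X) (hZ₀ : Z₀ ≤ Submodule.span ℝ (Set.range e))
    (hns : ¬ SeparableSpace Z₀) :
    ∃ (v : {α : Ordinal.{0} // α < (Cardinal.aleph 1).ord} → X)
      (ψ : {α : Ordinal.{0} // α < (Cardinal.aleph 1).ord} → X →L[ℝ] ℝ),
      (∀ β, v β ∈ Z₀) ∧ IsBiorthogonal v ψ := by
  classical
  obtain ⟨hbi, -, -⟩ := hM
  set 𝒮 : Set (Set (X × Γ)) :=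
    {A | (∀ p ∈ A, p.1 ∈ Z₀) ∧ ∀ p ∈ A, ∀ q ∈ A, f p.2 q.1 = if p = q then 1 else 0}
    with h𝒮
  obtain ⟨A, hAmax⟩ := zorn_subset 𝒮 (by
    intro c hc hchain
    refine ⟨⋃₀ c, ⟨?_, ?_⟩, fun s hs => Set.subset_sUnion_of_mem hs⟩
    · rintro p ⟨s, hs, hp⟩
      exact (hc hs).1 p hp
    · rintro p ⟨s, hs, hp⟩ q ⟨t, ht, hq⟩
      rcases hchain.total hs ht with hst | hts
      · exact (hc ht).2 p (hst hp) q hq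
      · exact (hc hs).2 p hp q (hts hq))
  have hA : A ∈ 𝒮 := hAmax.prop
  have hAunc : ¬ A.Countable := by
    intro hcnt
    obtain ⟨p, hpA, hg1, hg2⟩ := aux_extend hbi hZ₀ hns hA.1 hA.2 hcnt
    have hmem : insert p A ∈ 𝒮 := ⟨hg1, hg2⟩
    have := hAmax.2 hmem (Set.subset_insert p A)
    exact hpA (this (Set.mem_insert p A))
  have hcard : ℵ₁ ≤ #↥A := by
    by_contra h
    exact hAunc ((countable_iff_lt_aleph_one A).2 (not_le.1 h))
  have hmkι : #{α : Ordinal.{0} // α < (Cardinal.aleph 1).ord}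
      = Cardinal.lift.{1,0} (Cardinal.aleph 1) := by
    have h := Cardinal.mk_Iio_ordinal ((Cardinal.aleph 1).ord)
    rw [Cardinal.card_ord] at h
    exact h
  have hemb : Nonempty ({α : Ordinal.{0} // α < (Cardinal.aleph 1).ord} ↪ ↥A) := by
    rw [← lift_mk_le']
    rw [hmkι, Cardinal.lift_lift]
    have h2 : Cardinal.lift.{max (max u v) 1, 0} (Cardinal.aleph 1)
        = (ℵ₁ : Cardinal.{max (max u v) 1}) := by
      rw [lift_aleph]
      norm_num
    rw [h2]
    exact aleph_one_le_lift.2 hcard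
  obtain ⟨emb⟩ := hemb
  refine ⟨fun β => ((emb β : X × Γ)).1, fun β => f ((emb β : X × Γ)).2,
    fun β => hA.1 _ (emb β).2, ?_, ?_⟩
  · intro α
    have := hA.2 _ (emb α).2 _ (emb α).2
    simpa using this
  · intro α β hne
    have hne' : ((emb α) : X × Γ) ≠ (emb β) :=
      fun h => hne (emb.injective (Subtype.ext h))
    have := hA.2 _ (emb α).2 _ (emb β).2
    rwa [if_neg hne'] at this
end

section
/- Let Γ be a cardinal number that is strongly ω₁-inaccessible (ω₁ ⋘ Γ), and let X be a real Banach space with density character dens X = Γ that admits an M-basis {(e_α, e*_α)}_{α<Γ}. Define the support of z ∈ X as supp z := {α < Γ : e*_α(z) ≠ 0}. Let Z be a linear subspace of X whose cardinality as a set is at least Γ. Then every family F of unit vectors in Z with pairwise disjoint supports that is maximal (i.e., there is no unit vector z ∈ Z outside F whose support is disjoint from the support of every member of F) has cardinality Γ. In particular, this holds for every dense linear subspace Z of X. -/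
open Cardinal Ordinal TopologicalSpace

universe u v

lemma aux_finite_support {X : Type*} [NormedAddCommGroup X] [NormedSpace ℝ X]
    {ι : Type*} {e : ι → X} {f : ι → X →L[ℝ] ℝ}
    (hbi : IsBiorthogonal e f) {y : X} (hy : y ∈ Submodule.span ℝ (Set.range e)) :
    {γ | f γ y ≠ 0}.Finite := by
  obtain ⟨c, rfl⟩ := Finsupp.mem_span_range_iff_exists_finsupp.mp hy
  apply Set.Finite.subset c.support.finite_toSet
  intro γ hγ
  simp only [Set.mem_setOf_eq] at hγ
  by_contra hns
  apply hγ
  rw [map_finsuppSum, Finsupp.sum]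
  apply Finset.sum_eq_zero
  intro i hi
  have hne : γ ≠ i := fun h => hns (by simpa [h] using hi)
  rw [map_smul, hbi.2 γ i hne, smul_zero]

lemma aux_countable_support {X : Type*} [NormedAddCommGroup X] [NormedSpace ℝ X]
    {ι : Type*} {e : ι → X} {f : ι → X →L[ℝ] ℝ}
    (hbi : IsBiorthogonal e f)
    (hdense : Dense (Submodule.span ℝ (Set.range e) : Set X)) (x : X) :
    {γ | f γ x ≠ 0}.Countable := by
  obtain ⟨u, hu, htend⟩ := mem_closure_iff_seq_limit.mp (hdense x)
  refine Set.Countable.mono ?_ (Set.countable_iUnion fun n => (aux_finite_support hbi (hu n)).countable)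
  intro γ hγ
  simp only [Set.mem_setOf_eq] at hγ
  by_contra hn
  simp only [Set.mem_iUnion, Set.mem_setOf_eq, not_exists, not_not] at hn
  apply hγ
  have h1 : Filter.Tendsto (fun n => f γ (u n)) Filter.atTop (nhds (f γ x)) :=
    ((f γ).continuous.tendsto x).comp htend
  have h2 : Filter.Tendsto (fun n => f γ (u n)) Filter.atTop (nhds 0) := by
    simpa [hn] using (tendsto_const_nhds : Filter.Tendsto (fun _ : ℕ => (0:ℝ)) Filter.atTop (nhds 0))
  exact tendsto_nhds_unique h1 h2

lemma aux_mk_le (α : Type u) :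
    Cardinal.mk {g : α → ℝ // {a | g a ≠ 0}.Countable} ≤ Cardinal.mk (ℕ → Option (α × ℝ)) := by
  classical
  have key : ∀ g : {g : α → ℝ // {a | g a ≠ 0}.Countable},
      ∃ E : ℕ → Option (α × ℝ),
        (∀ n a r, E n = some (a, r) → r = g.1 a) ∧
        (∀ a, g.1 a ≠ 0 → ∃ n, E n = some (a, g.1 a)) := by
    intro g
    have hc : (insert none (Option.some '' {a | g.1 a ≠ 0}) : Set (Option α)).Countable :=
      (g.2.image _).insert none
    obtain ⟨F, hF⟩ := hc.exists_eq_range ⟨none, Set.mem_insert _ _⟩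
    refine ⟨fun n => (F n).map fun a => (a, g.1 a), ?_, ?_⟩
    · intro n a r h
      rw [Option.map_eq_some_iff] at h
      obtain ⟨a₀, _, h2⟩ := h
      injection h2 with h3 h4
      rw [← h4, h3]
    · intro a ha
      have hmem : some a ∈ Set.range F := hF ▸ Set.mem_insert_of_mem _ ⟨a, ha, rfl⟩
      obtain ⟨n, hn⟩ := hmem
      exact ⟨n, by show Option.map _ (F n) = _; rw [hn]; rfl⟩
  choose E hE1 hE2 using key
  apply Cardinal.mk_le_of_injective (f := E)
  intro g g' h
  apply Subtype.ext
  funext a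
  by_cases ha' : g'.1 a = 0
  · by_cases ha : g.1 a = 0
    · rw [ha, ha']
    · obtain ⟨n, hn⟩ := hE2 g a ha
      rw [h] at hn
      exact hE1 g' n a _ hn
  · obtain ⟨n, hn⟩ := hE2 g' a ha'
    rw [← h] at hn
    exact (hE1 g n a _ hn).symm

/-- (Theorem 5.2 of the paper.) If `ω₁ ⋘ Γ = dens X`, `X` has an M-basis,
and `Z` is a subspace of `X` of cardinality at least `Γ`, then every maximal family of
disjointly supported unit vectors in `Z` has cardinality `Γ`. -/
theorem statement16 {X : Type u} [NormedAddCommGroup X] [NormedSpace ℝ X] [CompleteSpace X]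
    {ι : Type u} (e : ι → X) (f : ι → X →L[ℝ] ℝ) (hM : IsMBasis e f)
    (Γ : Cardinal.{u}) (hΓ : StronglyOmega1Inaccessible Γ)
    (hmkι : Cardinal.mk ι = Γ) (hdens : densityChar X = Γ)
    (Z : Submodule ℝ X) (hZ : Γ ≤ Cardinal.mk Z)
    (F : Set X) (hFZ : F ⊆ (Z : Set X)) (hF1 : ∀ z ∈ F, ‖z‖ = 1)
    (hdisj : ∀ z ∈ F, ∀ w ∈ F, z ≠ w → {i | f i z ≠ 0} ∩ {i | f i w ≠ 0} = ∅)
    (hmax : ¬ ∃ z : X, z ∈ Z ∧ ‖z‖ = 1 ∧ z ∉ F ∧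
      ∀ w ∈ F, {i | f i z ≠ 0} ∩ {i | f i w ≠ 0} = ∅) :
    Cardinal.mk F = Γ := by
  classical
  obtain ⟨hbi, hdense, hsep⟩ := hM
  rcases isEmpty_or_nonempty ι with hι | hι
  · -- ι empty : X = {0}, F = ∅, Γ = 0
    have hF0 : F = ∅ := by
      ext w
      simp only [Set.mem_empty_iff_false, iff_false]
      intro hw
      have h1 := hF1 w hw
      rw [hsep w (fun γ => (hι.false γ).elim), norm_zero] at h1
      exact zero_ne_one h1
    rw [hF0, ← hmkι, Cardinal.mk_emptyCollection, Cardinal.mk_eq_zero]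
  · -- main case
    obtain ⟨α0⟩ := hι
    have he0 : e α0 ≠ 0 := by
      intro h
      have h1 := hbi.1 α0
      rw [h, map_zero] at h1
      exact zero_ne_one h1
    have hinj : Function.Injective (fun t : ℝ => t • e α0) := smul_left_injective ℝ he0
    haveI hXinf : Infinite X := Infinite.of_injective _ hinj
    have hΓinf : aleph0.{u} ≤ Γ := by
      by_contra hcon
      rw [not_le] at hcon
      have hne : {c : Cardinal.{u} | ∃ s : Set X, Dense s ∧ Cardinal.mk s = c}.Nonempty :=
        ⟨_, Set.univ, dense_univ, rfl⟩
      obtain ⟨D, hD, hmkD⟩ := csInf_mem hne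
      have hmkD' : Cardinal.mk D = Γ := by rw [hmkD]; exact hdens
      have hfin : D.Finite := by
        rw [← Cardinal.lt_aleph0_iff_set_finite, hmkD']; exact hcon
      have hDuniv : D = Set.univ := by
        rw [← hfin.isClosed.closure_eq]; exact hD.closure_eq
      have : Finite X := Set.finite_univ_iff.mp (hDuniv ▸ hfin)
      exact not_finite_iff_infinite.mpr hXinf this
    have h2Γ : (2 : Cardinal.{u}) < Γ :=
      lt_of_lt_of_le (by exact_mod_cast Cardinal.nat_lt_aleph0 2) hΓinf
    have hcont : Cardinal.continuum.{u} < Γ := by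
      have := hΓ 2 h2Γ
      rwa [Cardinal.two_power_aleph0] at this
    -- upper bound : mk F ≤ Γ
    have hFle : Cardinal.mk F ≤ Γ := by
      rw [← hmkι]
      have hex : ∀ w : F, ∃ i, f i (w : X) ≠ 0 := by
        intro w
        by_contra h
        push_neg at h
        have h0 := hsep w h
        have h1 := hF1 w w.2
        rw [h0, norm_zero] at h1
        exact zero_ne_one h1
      choose c hc using hex
      apply Cardinal.mk_le_of_injective (f := c)
      intro w w' h
      by_contra hne
      have hne' : (w : X) ≠ (w' : X) := fun hh => hne (Subtype.ext hh)
      have hd := hdisj w w.2 w' w'.2 hne'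
      have hmem : c w ∈ ({i | f i (w:X) ≠ 0} ∩ {i | f i (w':X) ≠ 0}) := ⟨hc w, h ▸ hc w'⟩
      rw [hd] at hmem
      exact hmem
    refine le_antisymm hFle ?_
    by_contra hlt
    rw [not_le] at hlt
    set S : Set ι := ⋃ w : F, {i | f i (w : X) ≠ 0} with hSdef
    have hSlt : Cardinal.mk S < Γ := by
      have h1 : Cardinal.mk S ≤ Cardinal.sum (fun w : F => Cardinal.mk {i | f i (w:X) ≠ 0}) :=
        Cardinal.mk_iUnion_le_sum_mk
      have h2 : Cardinal.sum (fun w : F => Cardinal.mk {i | f i (w:X) ≠ 0}) ≤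
          Cardinal.sum (fun _ : F => aleph0.{u}) := by
        apply Cardinal.sum_le_sum
        intro w
        haveI := (aux_countable_support hbi hdense (w : X)).to_subtype
        exact Cardinal.mk_le_aleph0
      rw [Cardinal.sum_const'] at h2
      exact lt_of_le_of_lt (h1.trans h2)
        (Cardinal.mul_lt_of_lt hΓinf hlt (lt_of_le_of_lt Cardinal.aleph0_le_continuum hcont))
    have hzero : ∃ z : X, z ∈ Z ∧ z ≠ 0 ∧ ∀ i ∈ S, f i z = 0 := by
      by_contra h
      push_neg at h
      have hcnt : ∀ z : Z, {a : S | f (a : ι) ((z : X)) ≠ 0}.Countable := fun z =>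
        (aux_countable_support hbi hdense (z : X)).preimage Subtype.val_injective
      have hφinj : Function.Injective
          (fun z : Z => (⟨fun a : S => f (a : ι) ((z : X)), hcnt z⟩ :
            {g : S → ℝ // {a | g a ≠ 0}.Countable})) := by
        intro z z' hzz
        have hval : ∀ a : S, f (a : ι) ((z : X)) = f (a : ι) ((z' : X)) := fun a =>
          congrFun (congrArg Subtype.val hzz) a
        apply Subtype.ext
        by_contra hne
        obtain ⟨i, hiS, hfi⟩ := h ((z : X) - (z' : X)) (Z.sub_mem z.2 z'.2)
          (sub_ne_zero.mpr hne)
        apply hfi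
        rw [map_sub]
        exact sub_eq_zero_of_eq (hval ⟨i, hiS⟩)
      have hb1 : Cardinal.mk Z ≤ Cardinal.mk {g : S → ℝ // {a | g a ≠ 0}.Countable} :=
        Cardinal.mk_le_of_injective hφinj
      have hb2 := aux_mk_le (S : Type u)
      have hb3 : Cardinal.mk (ℕ → Option (S × ℝ)) =
          (Cardinal.mk S * Cardinal.continuum.{u} + 1) ^ aleph0.{u} := by
        simp [Cardinal.mk_arrow, Cardinal.mk_option, Cardinal.mk_prod, Cardinal.mk_real,
          Cardinal.lift_continuum, Cardinal.lift_id', Cardinal.lift_aleph0]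
      have hκlt : Cardinal.mk S * Cardinal.continuum.{u} + 1 < Γ :=
        Cardinal.add_lt_of_lt hΓinf (Cardinal.mul_lt_of_lt hΓinf hSlt hcont)
          (lt_of_lt_of_le Cardinal.one_lt_aleph0 hΓinf)
      have hfinal := hΓ _ hκlt
      rw [← hb3] at hfinal
      exact absurd hZ (not_le.mpr (lt_of_le_of_lt (hb1.trans hb2) hfinal))
    obtain ⟨z₀, hz₀Z, hz₀ne, hz₀S⟩ := hzero
    apply hmax
    set z : X := (‖z₀‖ : ℝ)⁻¹ • z₀ with hzdef
    have hznorm : ‖z‖ = 1 := norm_smul_inv_norm hz₀ne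
    have hzZ : z ∈ Z := Z.smul_mem _ hz₀Z
    have hzsupp : ∀ i, f i z ≠ 0 → i ∉ S := by
      intro i hi hiS
      apply hi
      rw [hzdef, map_smul, hz₀S i hiS, smul_zero]
    have hdisjall : ∀ w ∈ F, {i | f i z ≠ 0} ∩ {i | f i w ≠ 0} = ∅ := by
      intro w hwF
      ext i
      simp only [Set.mem_inter_iff, Set.mem_setOf_eq, Set.mem_empty_iff_false, iff_false,
        not_and]
      intro h1 h2
      exact hzsupp i h1 (Set.mem_iUnion.mpr ⟨⟨w, hwF⟩, h2⟩)
    have hznF : z ∉ F := by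
      intro hzF
      have hzne : z ≠ 0 := fun hh => by rw [hh, norm_zero] at hznorm; exact zero_ne_one hznorm
      have : ∃ i, f i z ≠ 0 := by
        by_contra hcon
        push_neg at hcon
        exact hzne (hsep z hcon)
      obtain ⟨i, hfi⟩ := this
      exact hzsupp i hfi (Set.mem_iUnion.mpr ⟨⟨z, hzF⟩, hfi⟩)
    exact ⟨z, hzZ, hznorm, hznF, hdisjall⟩
end

section
/- Let Γ be a cardinal number with ω₁ ⋘ Γ and let ι be an index set of cardinality Γ. Then every dense linear subspace Z of the real Hilbert space ℓ₂(ι) contains an orthonormal system of cardinality Γ: a family of Γ-many vectors in Z, each of norm one, that are pairwise orthogonal. -/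
open Cardinal Ordinal TopologicalSpace

universe u v

/-- Auxiliary: the collection of countably-supported real functions on `S` has
cardinality at most `(#S * 𝔠 + 1) ^ ℵ₀`. -/
lemma aux_mk_countable_support_le (S : Type u) :
    Cardinal.mk {f : S → ℝ // (Function.support f).Countable} ≤
      (Cardinal.mk S * Cardinal.continuum + 1) ^ Cardinal.aleph0.{u} := by
  classical
  have henum : ∀ f : {f : S → ℝ // (Function.support f).Countable},
      ∃ g : ℕ → Option S, ∀ x ∈ Function.support f.1, ∃ n, g n = some x := by
    intro f
    have hc : ((Option.some '' Function.support f.1) ∪ {none}).Countable :=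
      (f.2.image _).union (Set.countable_singleton _)
    have hne : ((Option.some '' Function.support f.1) ∪ {none}).Nonempty :=
      ⟨none, Or.inr rfl⟩
    obtain ⟨g, hg⟩ := hc.exists_eq_range hne
    refine ⟨g, fun x hx => ?_⟩
    have hx' : some x ∈ Set.range g := by
      rw [← hg]; exact Or.inl ⟨x, hx, rfl⟩
    obtain ⟨n, hn⟩ := hx'
    exact ⟨n, hn⟩
  choose g hg using henum
  set E : {f : S → ℝ // (Function.support f).Countable} → (ULift.{u} ℕ → Option (S × ℝ)) :=
    fun f n => (g f n.down).map fun x => (x, f.1 x) with hE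
  have key : ∀ (f₁ f₂ : {f : S → ℝ // (Function.support f).Countable}), E f₁ = E f₂ →
      ∀ x, f₁.1 x ≠ 0 → f₂.1 x = f₁.1 x := by
    intro f₁ f₂ h x hx
    obtain ⟨n, hn⟩ := hg f₁ x hx
    have h1 : E f₁ ⟨n⟩ = some (x, f₁.1 x) := by simp [hE, hn]
    have h2 : E f₂ ⟨n⟩ = some (x, f₁.1 x) := by rw [← h, h1]
    rw [hE] at h2
    simp only [Option.map_eq_some_iff] at h2
    obtain ⟨a, _, ha2⟩ := h2
    obtain ⟨rfl, hval⟩ := Prod.mk.injEq .. ▸ ha2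
    exact hval
  have hinj : Function.Injective E := by
    intro f₁ f₂ h
    apply Subtype.ext; funext x
    by_cases h1 : f₁.1 x = 0
    · by_cases h2 : f₂.1 x = 0
      · rw [h1, h2]
      · rw [h1, ← key f₂ f₁ h.symm x h2, h1]
    · rw [key f₁ f₂ h x h1]
  calc Cardinal.mk {f : S → ℝ // (Function.support f).Countable}
      ≤ Cardinal.mk (ULift.{u} ℕ → Option (S × ℝ)) := Cardinal.mk_le_of_injective hinj
    _ = (Cardinal.mk S * Cardinal.continuum + 1) ^ Cardinal.aleph0.{u} := by
        simp [Cardinal.mk_arrow, Cardinal.mk_option, Cardinal.mk_prod, Cardinal.mk_real,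
          Cardinal.lift_continuum, Cardinal.lift_id, Cardinal.mk_uLift, Cardinal.lift_uzero,
          Cardinal.lift_aleph0]

/-- Auxiliary: the standard unit vectors in `ℓ₂(ι)` form an orthonormal family. -/
lemma aux_orthonormal_single {ι : Type u} [DecidableEq ι] :
    Orthonormal ℝ (fun i : ι => lp.single 2 i (1 : ℝ)) := by
  classical
  rw [orthonormal_iff_ite]
  intro i j
  rw [lp.inner_single_left]
  by_cases h : i = j
  · subst h
    simp [lp.single_apply_self, RCLike.inner_apply]
  · rw [lp.single_apply_ne (E := fun _ : ι => ℝ) 2 j 1 h]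
    simp [h]

/-- (Corollary 5.7 of the paper.) If `ω₁ ⋘ Γ = |ι|`, every dense linear
subspace of `ℓ₂(ι)` contains an orthonormal system of cardinality `Γ`. -/
theorem statement19 (Γ : Cardinal.{u}) (hΓ : StronglyOmega1Inaccessible Γ)
    {ι : Type u} (hι : Cardinal.mk ι = Γ)
    (Z : Submodule ℝ (lp (fun _ : ι => ℝ) 2))
    (hZ : Dense (Z : Set (lp (fun _ : ι => ℝ) 2))) :
    ∃ (T : Type u) (v : T → lp (fun _ : ι => ℝ) 2),
      Cardinal.mk T = Γ ∧ (∀ t, v t ∈ Z) ∧ Orthonormal ℝ v := by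
  classical
  by_cases hfin : Γ < Cardinal.aleph0
  · -- finite-dimensional case: `Z = ⊤`
    have hfin' : Cardinal.mk ι < Cardinal.aleph0 := by rw [hι]; exact hfin
    have : Finite ι := Cardinal.mk_lt_aleph0_iff.1 hfin'
    cases nonempty_fintype ι
    have hfd1 : FiniteDimensional ℝ (ι → ℝ) := inferInstance
    have e2 : PiLp 2 (fun _ : ι => ℝ) ≃ₗ[ℝ] (ι → ℝ) := WithLp.linearEquiv 2 ℝ (ι → ℝ)
    have hfd2 : FiniteDimensional ℝ (PiLp 2 (fun _ : ι => ℝ)) := e2.symm.finiteDimensional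
    have e1 : lp (fun _ : ι => ℝ) 2 ≃ₗ[ℝ] PiLp 2 (fun _ : ι => ℝ) :=
      (lpPiLpₗᵢ (fun _ : ι => ℝ) ℝ (p := 2)).toLinearEquiv
    have hfd : FiniteDimensional ℝ (lp (fun _ : ι => ℝ) 2) := e1.symm.finiteDimensional
    have hcl : IsClosed (Z : Set (lp (fun _ : ι => ℝ) 2)) := Submodule.closed_of_finiteDimensional Z
    have huniv : (Z : Set (lp (fun _ : ι => ℝ) 2)) = Set.univ := by
      rw [← hcl.closure_eq]; exact hZ.closure_eq
    have hZtop : ∀ x : lp (fun _ : ι => ℝ) 2, x ∈ Z := fun x => by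
      have : x ∈ (Z : Set (lp (fun _ : ι => ℝ) 2)) := huniv ▸ Set.mem_univ x
      exact this
    exact ⟨ι, fun i => lp.single 2 i 1, hι, fun i => hZtop _, aux_orthonormal_single⟩
  · -- infinite case
    have hℵ : Cardinal.aleph0 ≤ Γ := not_lt.1 hfin
    have h2Γ : (2 : Cardinal) < Γ :=
      lt_of_lt_of_le (Cardinal.lt_aleph0.2 ⟨2, by norm_num⟩) hℵ
    have h𝔠 : Cardinal.continuum < Γ := by
      have := hΓ 2 h2Γ
      rwa [Cardinal.two_power_aleph0] at this
    have hone : (1 : Cardinal) < Γ := Cardinal.one_lt_aleph0.trans_le hℵ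
    have hℵΓ : Cardinal.aleph0 < Γ := Cardinal.aleph0_lt_continuum.trans h𝔠
    -- countable supports
    have hsupp : ∀ f : lp (fun _ : ι => ℝ) 2, (Function.support (f : ι → ℝ)).Countable := by
      intro f
      have h1 : Summable (fun j => ‖(f : ι → ℝ) j‖ ^ (2 : ENNReal).toReal) :=
        (lp.memℓp f).summable (by norm_num)
      refine Set.Countable.mono (fun j hj => ?_) h1.countable_support
      have hj' : (f : ι → ℝ) j ≠ 0 := hj
      have : (0 : ℝ) < ‖(f : ι → ℝ) j‖ ^ (2 : ENNReal).toReal :=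
        Real.rpow_pos_of_pos (norm_pos_iff.2 hj') _
      exact ne_of_gt this
    -- Zorn: a maximal orthonormal subset of Z
    set 𝒮 : Set (Set (lp (fun _ : ι => ℝ) 2)) :=
      {N | N ⊆ (Z : Set (lp (fun _ : ι => ℝ) 2)) ∧ Orthonormal ℝ (fun m : N => (m : lp (fun _ : ι => ℝ) 2))} with h𝒮
    have hchains : ∀ c ⊆ 𝒮, IsChain (· ⊆ ·) c → ∃ ub ∈ 𝒮, ∀ s ∈ c, s ⊆ ub := by
      intro c hc hchain
      refine ⟨⋃₀ c, ⟨Set.sUnion_subset fun s hs => (hc hs).1, ?_⟩,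
        fun s hs => Set.subset_sUnion_of_mem hs⟩
      rw [orthonormal_subtype_iff_ite]
      rintro v hv x hx
      obtain ⟨s, hs, hvs⟩ := hv
      obtain ⟨t, ht, hxt⟩ := hx
      rcases hchain.total hs ht with hst | hts
      · exact orthonormal_subtype_iff_ite.1 (hc ht).2 v (hst hvs) x hxt
      · exact orthonormal_subtype_iff_ite.1 (hc hs).2 v hvs x (hts hxt)
    obtain ⟨M, hMmax⟩ := zorn_subset 𝒮 hchains
    have hM𝒮 : M ∈ 𝒮 := hMmax.1
    have hMZ : M ⊆ (Z : Set (lp (fun _ : ι => ℝ) 2)) := hM𝒮.1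
    have hMon : Orthonormal ℝ (fun m : M => (m : lp (fun _ : ι => ℝ) 2)) := hM𝒮.2
    -- the union of supports
    set S : Set ι := ⋃ (m : M), Function.support (((m : lp (fun _ : ι => ℝ) 2) : ι → ℝ)) with hS
    -- key fact from maximality
    have hA : ∀ w : lp (fun _ : ι => ℝ) 2, w ∈ Z → (∀ k ∈ S, (w : ι → ℝ) k = 0) → w = 0 := by
      intro w hwZ hw0
      by_contra hw
      have horto : ∀ m ∈ M, (inner ℝ m w : ℝ) = 0 := by
        intro m hm
        rw [lp.inner_eq_tsum]
        have hterm : ∀ k, ((m : ι → ℝ) k) * ((w : ι → ℝ) k) = 0 := by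
          intro k
          by_cases hk : (m : ι → ℝ) k = 0
          · simp [hk]
          · have hkS : k ∈ S := Set.mem_iUnion.2 ⟨⟨m, hm⟩, hk⟩
            simp [hw0 k hkS]
        simp [RCLike.inner_apply, fun k => (mul_comm ((w : ι → ℝ) k) _).trans (hterm k)]
      set u : lp (fun _ : ι => ℝ) 2 := ‖w‖⁻¹ • w with hu
      have huZ : u ∈ Z := Z.smul_mem _ hwZ
      have hwn : ‖w‖ ≠ 0 := norm_ne_zero_iff.2 hw
      have hwp : (0 : ℝ) < ‖w‖ := norm_pos_iff.2 hw
      have huno : ‖u‖ = 1 := by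
        rw [hu, norm_smul, norm_inv, norm_norm, inv_mul_cancel₀ hwn]
      have huM : u ∉ M := by
        intro huM
        have h0 := horto u huM
        rw [hu, real_inner_smul_left, real_inner_self_eq_norm_sq] at h0
        have hpos : (0 : ℝ) < ‖w‖⁻¹ * ‖w‖ ^ 2 := by positivity
        linarith
      have hins : insert u M ∈ 𝒮 := by
        refine ⟨Set.insert_subset_iff.2 ⟨huZ, hMZ⟩, ?_⟩
        rw [orthonormal_subtype_iff_ite]
        intro v hv x hx
        have hMite := orthonormal_subtype_iff_ite.1 hMon
        rcases hv with rfl | hvM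
        · rcases hx with rfl | hxM
          · rw [if_pos rfl, real_inner_self_eq_norm_sq, huno]; norm_num
          · have hvx : u ≠ x := fun h => huM (h ▸ hxM)
            rw [if_neg hvx, hu, real_inner_smul_left, real_inner_comm, horto x hxM, mul_zero]
        · rcases hx with rfl | hxM
          · have hvx : v ≠ u := fun h => huM (h ▸ hvM)
            rw [if_neg hvx, hu, real_inner_smul_right, horto v hvM, mul_zero]
          · exact hMite v hvM x hxM
      have hsub : insert u M ⊆ M := hMmax.2 hins (Set.subset_insert _ _)
      exact huM (hsub (Set.mem_insert u M))
    -- cardinality of M is at least Γ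
    have hcard : Γ ≤ Cardinal.mk M := by
      by_contra hlt
      push_neg at hlt
      have hSlt : Cardinal.mk S < Γ := by
        have h1 : Cardinal.mk S ≤ Cardinal.mk M * Cardinal.aleph0 := by
          refine (Cardinal.mk_iUnion_le _).trans ?_
          refine mul_le_mul_right (ciSup_le' fun m => ?_) _
          exact Cardinal.mk_le_aleph0_iff.2 (hsupp (m : lp (fun _ : ι => ℝ) 2)).to_subtype
        exact h1.trans_lt (Cardinal.mul_lt_of_lt hℵ hlt hℵΓ)
      have hcomp : Γ ≤ Cardinal.mk (Sᶜ : Set ι) := by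
        by_contra hcc
        push_neg at hcc
        have := Cardinal.add_lt_of_lt hℵ hSlt hcc
        rw [Cardinal.mk_sum_compl, hι] at this
        exact lt_irrefl _ this
      -- choose approximants of unit vectors
      have hz : ∀ i : ι, ∃ w : lp (fun _ : ι => ℝ) 2, w ∈ Z ∧ dist (lp.single 2 i (1 : ℝ)) w < 1/3 := by
        intro i
        have hmem : (lp.single 2 i (1 : ℝ)) ∈ closure (Z : Set (lp (fun _ : ι => ℝ) 2)) := hZ _
        rcases Metric.mem_closure_iff.1 hmem (1/3) (by norm_num) with ⟨w, hw, hd⟩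
        exact ⟨w, hw, hd⟩
      choose z hzZ hzd using hz
      set Φ : (Sᶜ : Set ι) → {f : S → ℝ // (Function.support f).Countable} :=
        fun i => ⟨fun s => (z i : ι → ℝ) s, by
          have : Function.support (fun s : S => (z i : ι → ℝ) s) ⊆
              (Subtype.val) ⁻¹' (Function.support ((z i : ι → ℝ))) := fun s hs => hs
          exact ((hsupp (z i)).preimage Subtype.val_injective).mono this⟩ with hΦ
      have hΦni : ¬ Function.Injective Φ := by
        intro hinj
        have h1 : Γ ≤ Cardinal.mk {f : S → ℝ // (Function.support f).Countable} :=
          hcomp.trans (Cardinal.mk_le_of_injective hinj)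
        have hbase : Cardinal.mk S * Cardinal.continuum + 1 < Γ :=
          Cardinal.add_lt_of_lt hℵ (Cardinal.mul_lt_of_lt hℵ hSlt h𝔠) hone
        have h4 := hΓ _ hbase
        exact absurd (h1.trans (aux_mk_countable_support_le S)) (not_le.2 h4)
      obtain ⟨i, j, hij, hne⟩ := Function.not_injective_iff.1 hΦni
      have hzeq : z i = z j := by
        have hzero : ∀ k ∈ S, ((z i - z j : lp (fun _ : ι => ℝ) 2) : ι → ℝ) k = 0 := by
          intro k hk
          have h5 : (z i : ι → ℝ) k = (z j : ι → ℝ) k := by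
            have := congrArg Subtype.val hij
            exact congrFun this ⟨k, hk⟩
          simp [lp.coeFn_sub, h5]
        have := hA _ (Z.sub_mem (hzZ i) (hzZ j)) hzero
        exact sub_eq_zero.1 this
      have hne' : (i : ι) ≠ (j : ι) := fun h => hne (Subtype.ext h)
      have hlow : (1 : ℝ) ≤ dist (lp.single (E := fun _ : ι => ℝ) 2 (i : ι) (1 : ℝ)) (lp.single (E := fun _ : ι => ℝ) 2 (j : ι) (1 : ℝ)) := by
        rw [dist_eq_norm]
        have hb := lp.norm_apply_le_norm (by norm_num : (2 : ENNReal) ≠ 0)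
          (lp.single (E := fun _ : ι => ℝ) 2 (i : ι) (1 : ℝ) - lp.single (E := fun _ : ι => ℝ) 2 (j : ι) (1 : ℝ)) (i : ι)
        have hval : ((lp.single (E := fun _ : ι => ℝ) 2 (i : ι) (1 : ℝ) - lp.single (E := fun _ : ι => ℝ) 2 (j : ι) (1 : ℝ)) : ι → ℝ) (i : ι)
            = 1 := by
          simp [lp.coeFn_sub, lp.single_apply_self, lp.single_apply_ne (E := fun _ : ι => ℝ) 2 (j : ι) 1 hne', Pi.single_apply, hne']
        rw [lp.coeFn_sub] at hb
        rw [hval] at hb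
        simpa using hb
      have hup : dist (lp.single (E := fun _ : ι => ℝ) 2 (i : ι) (1 : ℝ)) (lp.single (E := fun _ : ι => ℝ) 2 (j : ι) (1 : ℝ)) < 1 := by
        have ht := dist_triangle (lp.single (E := fun _ : ι => ℝ) 2 (i : ι) (1 : ℝ)) (z i)
          (lp.single (E := fun _ : ι => ℝ) 2 (j : ι) (1 : ℝ))
        have h1 := hzd i
        have h2 : dist (z i) (lp.single (E := fun _ : ι => ℝ) 2 (j : ι) (1 : ℝ)) < 1/3 := by
          rw [hzeq, dist_comm]
          exact hzd j
        linarith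
      linarith
    -- extract a subfamily of cardinality exactly Γ
    obtain ⟨p, hp⟩ := Cardinal.le_mk_iff_exists_set.1 hcard
    refine ⟨p, fun t => ((t : M) : lp (fun _ : ι => ℝ) 2), hp, fun t => hMZ (t : M).2, ?_⟩
    exact hMon.comp (fun t : p => (t : M)) Subtype.val_injective
end
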